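/- arXiv:2402.14557 — 2 statements merged into one kernel-verified Lean document; each statement's English description precedes it below -/
import Mathlib

section
/- Let Set* denote the category obtained from Set by freely adjoining a terminal object ⋆ (so Hom(X, ⋆) is a singleton for every set X, Hom(⋆, X) is empty for every set X, and Hom(⋆, ⋆) contains only the identity). Then Set* has finite limits, but no object of Set* is a strong generator: for every object G there is a non-invertible morphism m such that for every h : G → cod(m) there is a unique g : G → dom(m) with m ∘ g = h. Consequently Set* is not equivalent to any variety, although it has finite limits, effective congruences, and 1 is an abstractly finite, regularly projective generator. -/
open CategoryTheory

universe v u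

namespace Paper

variable {K : Type u} [Category.{v} K]

/-- `C` together with the injections `ι` is a coproduct of the family `Y`. -/
def IsCoproductOf {M : Type v} (Y : M → K) (C : K) (ι : ∀ m, Y m ⟶ C) : Prop :=
  ∀ (Z : K) (g : ∀ m, Y m ⟶ Z), ∃! d : C ⟶ Z, ∀ m, ι m ≫ d = g m

/-- `G` has copowers: all set-indexed coproducts of copies of `G` exist. -/
def HasCopowers (G : K) : Prop :=
  ∀ M : Type v, ∃ (C : K) (ι : M → (G ⟶ C)), IsCoproductOf (fun _ : M => G) C ι

/-- `e` is a coequalizer of the pair `r0, r1`. -/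
def IsCoequalizerOf {R A B : K} (r0 r1 : R ⟶ A) (e : A ⟶ B) : Prop :=
  r0 ≫ e = r1 ≫ e ∧
    ∀ (Z : K) (f : A ⟶ Z), r0 ≫ f = r1 ≫ f → ∃! g : B ⟶ Z, e ≫ g = f

/-- `e` is a regular epimorphism: a coequalizer of some parallel pair. -/
def IsRegEpi {A B : K} (e : A ⟶ B) : Prop :=
  ∃ (R : K) (r0 r1 : R ⟶ A), IsCoequalizerOf r0 r1 e

/-- `r0, r1` is a kernel pair of `f`. -/
def IsKernelPairOf {R A B : K} (r0 r1 : R ⟶ A) (f : A ⟶ B) : Prop :=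
  r0 ≫ f = r1 ≫ f ∧
    ∀ (S : K) (s0 s1 : S ⟶ A), s0 ≫ f = s1 ≫ f →
      ∃! t : S ⟶ R, t ≫ r0 = s0 ∧ t ≫ r1 = s1

def HasKernelPairs (K : Type u) [Category.{v} K] : Prop :=
  ∀ (A B : K) (f : A ⟶ B), ∃ (R : K) (r0 r1 : R ⟶ A), IsKernelPairOf r0 r1 f

def HasCoequalizersOfKernelPairs (K : Type u) [Category.{v} K] : Prop :=
  ∀ (R A B : K) (f : A ⟶ B) (r0 r1 : R ⟶ A), IsKernelPairOf r0 r1 f →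
    ∃ (C : K) (e : A ⟶ C), IsCoequalizerOf r0 r1 e

/-- `e` is a strong (extremal) epimorphism. -/
def IsExtremalEpi {A B : K} (e : A ⟶ B) : Prop :=
  Epi e ∧ ∀ (C : K) (g : A ⟶ C) (m : C ⟶ B), Mono m → g ≫ m = e → IsIso m

/-- `G` is a generator: every canonical morphism `[h] : ∐_{h : G ⟶ X} G ⟶ X` is epic. -/
def GeneratorP (G : K) : Prop :=
  ∀ (X C : K) (ι : (G ⟶ X) → (G ⟶ C)), IsCoproductOf (fun _ : (G ⟶ X) => G) C ι →
    ∀ d : C ⟶ X, (∀ h, ι h ≫ d = h) → Epi d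

/-- `G` is a strong generator: every canonical morphism is a strong (extremal) epimorphism. -/
def StrongGenerator (G : K) : Prop :=
  ∀ (X C : K) (ι : (G ⟶ X) → (G ⟶ C)), IsCoproductOf (fun _ : (G ⟶ X) => G) C ι →
    ∀ d : C ⟶ X, (∀ h, ι h ≫ d = h) → IsExtremalEpi d

/-- `G` is a regular generator: every canonical morphism is a regular epimorphism. -/
def RegularGenerator (G : K) : Prop :=
  ∀ (X C : K) (ι : (G ⟶ X) → (G ⟶ C)), IsCoproductOf (fun _ : (G ⟶ X) => G) C ι →
    ∀ d : C ⟶ X, (∀ h, ι h ≫ d = h) → IsRegEpi d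

/-- `G` is a regular projective: morphisms from `G` factor through regular epimorphisms. -/
def RegularProjective (G : K) : Prop :=
  ∀ (A B : K) (e : A ⟶ B), IsRegEpi e → ∀ g : G ⟶ B, ∃ f : G ⟶ A, f ≫ e = g

/-- `G` is abstractly finite: every morphism from `G` into a copower `M·G` factors
through the subcopower induced by a finite subset `M₀ ⊆ M`. -/
def AbstractlyFinite (G : K) : Prop :=
  ∀ (M : Type v) (C : K) (ι : M → (G ⟶ C)), IsCoproductOf (fun _ : M => G) C ι →
    ∀ f : G ⟶ C, ∃ M₀ : Set M, M₀.Finite ∧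
      ∀ (C₀ : K) (ι₀ : M₀ → (G ⟶ C₀)) (u : C₀ ⟶ C),
        IsCoproductOf (fun _ : M₀ => G) C₀ ι₀ → (∀ m : M₀, ι₀ m ≫ u = ι m.1) →
          ∃ g : G ⟶ C₀, g ≫ u = f

/-- `G` is finitely generated: its hom-functor `K(G,−) : K ⥤ Set` preserves colimits of
directed diagrams all of whose connecting morphisms are monomorphisms. -/
def FinitelyGenerated (G : K) : Prop :=
  ∀ (J : Type v) [Preorder J], IsDirected J (· ≤ ·) → Nonempty J →
    ∀ (D : J ⥤ K), (∀ (i j : J) (f : i ⟶ j), Mono (D.map f)) →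
      ∀ (c : Limits.Cocone D), Nonempty (Limits.IsColimit c) →
        Nonempty (Limits.IsColimit ((coyoneda.obj (Opposite.op G)).mapCocone c))

/-- The pair `s0, s1` factorizes through the relation `r0, r1`. -/
def Factors {R A S : K} (r0 r1 : R ⟶ A) (s0 s1 : S ⟶ A) : Prop :=
  ∃ t : S ⟶ R, t ≫ r0 = s0 ∧ t ≫ r1 = s1

def CollectivelyMonic {R A : K} (r0 r1 : R ⟶ A) : Prop :=
  ∀ (S : K) (f g : S ⟶ R), f ≫ r0 = g ≫ r0 → f ≫ r1 = g ≫ r1 → f = g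

/-- A congruence: a collectively monic pair which is reflexive, symmetric and transitive. -/
def IsCongruence {R A : K} (r0 r1 : R ⟶ A) : Prop :=
  CollectivelyMonic r0 r1 ∧
  (∀ (S : K) (s : S ⟶ A), Factors r0 r1 s s) ∧
  (∀ (S : K) (s s' : S ⟶ A), Factors r0 r1 s s' → Factors r0 r1 s' s) ∧
  (∀ (S : K) (s s' s'' : S ⟶ A),
    Factors r0 r1 s s' → Factors r0 r1 s' s'' → Factors r0 r1 s s'')

def HasCoequalizersOfCongruences (K : Type u) [Category.{v} K] : Prop :=
  ∀ (R A : K) (r0 r1 : R ⟶ A), IsCongruence r0 r1 →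
    ∃ (C : K) (e : A ⟶ C), IsCoequalizerOf r0 r1 e

/-- `K` has effective congruences: every congruence is a kernel pair. -/
def EffectiveCongruences (K : Type u) [Category.{v} K] : Prop :=
  ∀ (R A : K) (r0 r1 : R ⟶ A), IsCongruence r0 r1 →
    ∃ (B : K) (f : A ⟶ B), IsKernelPairOf r0 r1 f

/-- A coequalizer diagram in `Set`. -/
def IsCoequalizerOfTypes {R A C : Type v} (u v : R → A) (q : A → C) : Prop :=
  q ∘ u = q ∘ v ∧
    ∀ {Z : Type v} (h : A → Z), h ∘ u = h ∘ v → ∃! k : C → Z, k ∘ q = h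

/-- `G` is effective: its hom-functor sends coequalizers of congruences to
coequalizers in `Set`. -/
def EffectiveObject (G : K) : Prop :=
  ∀ (R A : K) (r0 r1 : R ⟶ A), IsCongruence r0 r1 →
    ∀ (C : K) (e : A ⟶ C), IsCoequalizerOf r0 r1 e →
      IsCoequalizerOfTypes (fun f : G ⟶ R => f ≫ r0) (fun f : G ⟶ R => f ≫ r1)
        (fun g : G ⟶ A => g ≫ e)

/-- The square with projections `f', e'` is a pullback of `e` along `f`. -/
def IsPullbackOf {P A B Q : K} (f' : P ⟶ A) (e' : P ⟶ B) (e : A ⟶ Q) (f : B ⟶ Q) : Prop :=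
  f' ≫ e = e' ≫ f ∧
    ∀ (S : K) (a : S ⟶ A) (b : S ⟶ B), a ≫ e = b ≫ f →
      ∃! t : S ⟶ P, t ≫ f' = a ∧ t ≫ e' = b

/-- A varietal generator: a strong generator with copowers which is abstractly finite
and regularly projective. -/
def VarietalGenerator (G : K) : Prop :=
  HasCopowers G ∧ StrongGenerator G ∧ AbstractlyFinite G ∧ RegularProjective G

/-- Barr-exactness: kernel pairs and their coequalizers exist, congruences are effective,
and regular epimorphisms are stable under pullback. -/
def BarrExact (K : Type u) [Category.{v} K] : Prop :=
  HasKernelPairs K ∧ HasCoequalizersOfKernelPairs K ∧ EffectiveCongruences K ∧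
    ∀ (P A B Q : K) (f' : P ⟶ A) (e' : P ⟶ B) (e : A ⟶ Q) (f : B ⟶ Q),
      IsPullbackOf f' e' e f → IsRegEpi e → IsRegEpi e'

/-!
Everything is computed with points `1 ⟶ X`: an object other than `⋆` is the copower of `1`
indexed by its points, and points separate morphisms. Limits are hence compatible families of
points (or `⋆` when the whole diagram is `⋆`), a congruence on a set is an equivalence relation on
its points, and coequalizers of sets are surjective.

For a set `G`, the map `1 ⟶ ⋆` is bijective on maps out of `G`, since both hom-sets are
singletons; for `G = ⋆`, the map `∅ ⟶ 1` is, since both are empty. Neither is invertible. In an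
algebra category, maps out of the free algebra on one generator are the elements, and the forgetful
functor reflects isomorphisms, so no equivalence with such a category can exist.
-/

lemma IsCoequalizerOf.epi {R A B : K} {r0 r1 : R ⟶ A} {e : A ⟶ B}
    (he : IsCoequalizerOf r0 r1 e) : Epi e where
  left_cancellation u w huw := by
    obtain ⟨_, -, huniq⟩ := he.2 _ (e ≫ u) (by rw [reassoc_of% he.1])
    exact (huniq u rfl).trans (huniq w huw.symm).symm

lemma IsKernelPairOf.of_factors {R A B : K} {r0 r1 : R ⟶ A} {f : A ⟶ B}
    (hr : CollectivelyMonic r0 r1) (hf : r0 ≫ f = r1 ≫ f)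
    (hfac : ∀ (S : K) (s0 s1 : S ⟶ A), s0 ≫ f = s1 ≫ f → Factors r0 r1 s0 s1) :
    IsKernelPairOf r0 r1 f := by
  refine ⟨hf, fun S s0 s1 hs => ?_⟩
  obtain ⟨t, ht0, ht1⟩ := hfac S s0 s1 hs
  exact ⟨t, ⟨ht0, ht1⟩, fun t' ⟨h0, h1⟩ => hr S t' t (h0.trans ht0.symm) (h1.trans ht1.symm)⟩

lemma IsCoproductOf.exists_eq_inj {M : Type v} {G C C' : K} {ι : M → (G ⟶ C)}
    {ι' : M → (G ⟶ C')} (hC : IsCoproductOf (fun _ => G) C ι)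
    (hC' : IsCoproductOf (fun _ => G) C' ι') (h' : ∀ f : G ⟶ C', ∃ m, f = ι' m) (f : G ⟶ C) :
    ∃ m, f = ι m := by
  obtain ⟨v, hv, -⟩ := hC C' ι'
  obtain ⟨u, hu, -⟩ := hC' C ι
  obtain ⟨_, -, huniq⟩ := hC C ι
  have hvu : v ≫ u = 𝟙 C :=
    (huniq _ fun m => by rw [reassoc_of% (hv m), hu]).trans
      (huniq _ fun _ => Category.comp_id _).symm
  obtain ⟨m, hm⟩ := h' (f ≫ v)
  exact ⟨m, by rw [← Category.comp_id f, ← hvu, reassoc_of% hm, hu]⟩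

lemma Adjunction.bijective_comp_iff {C D : Type*} [Category C] [Category D] {L : C ⥤ D}
    {R : D ⥤ C} (adj : L ⊣ R) (X : C) {A B : D} (m : A ⟶ B) :
    (Function.Bijective fun g : L.obj X ⟶ A => g ≫ m) ↔
      Function.Bijective fun g : X ⟶ R.obj A => g ≫ R.map m := by
  have hcomm : (fun g : X ⟶ R.obj A => g ≫ R.map m) ∘ adj.homEquiv X A =
      adj.homEquiv X B ∘ fun g => g ≫ m :=
    funext fun g => (adj.homEquiv_naturality_right g m).symm
  rw [← Equiv.bijective_comp (adj.homEquiv X A), hcomm, Equiv.comp_bijective]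

lemma bijective_comp_punit_iff {X Y : Type v} (f : X ⟶ Y) :
    (Function.Bijective fun g : (PUnit : Type v) ⟶ X => g ≫ f) ↔ Function.Bijective f := by
  let e (Z : Type v) : ((PUnit : Type v) ⟶ Z) ≃ Z :=
    TypeCat.homEquiv.trans (Equiv.funUnique _ _)
  rw [← Equiv.comp_bijective _ (e Y), ← Equiv.bijective_comp (e X).symm]
  rfl

lemma Monad.isIso_of_bijective_comp_free {T : Monad (Type v)} {A B : T.Algebra} (m : A ⟶ B)
    (hm : Function.Bijective fun g : T.free.obj PUnit ⟶ A => g ≫ m) : IsIso m := by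
  rw [Adjunction.bijective_comp_iff T.adj, bijective_comp_punit_iff,
    ← isIso_iff_bijective] at hm
  exact isIso_of_reflects_iso m T.forget

open WithTerminal

abbrev one : WithTerminal (Type v) := of PUnit

def point {W : Type v} (w : W) : one ⟶ of W := incl.map (↾fun _ => w)

lemma point_comp {W S : Type v} (w : W) (f : of W ⟶ of S) :
    point w ≫ f = point (down f w) :=
  rfl

lemma hom_ext_down {W S : Type v} {u u' : of W ⟶ of S} (h : ∀ w, down u w = down u' w) :
    u = u' :=
  TypeCat.homEquiv.injective (funext h)

lemma eq_point {W : Type v} (x : one ⟶ of W) : x = point (down x PUnit.unit) :=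
  hom_ext_down fun _ => rfl

lemma hom_ext_point {W : Type v} {Y : WithTerminal (Type v)} {u u' : of W ⟶ Y}
    (h : ∀ w, point w ≫ u = point w ≫ u') : u = u' := by
  cases Y with
  | star => exact Subsingleton.elim _ _
  | of S =>
    exact hom_ext_down fun w => congrArg (fun x : one ⟶ of S => down x PUnit.unit) (h w)

instance (P : WithTerminal (Type v)) : Subsingleton (P ⟶ one) := by
  cases P with
  | star => exact ⟨fun f => (false_of_from_star f).elim⟩
  | of W => exact ⟨fun f g => hom_ext_down fun _ => rfl⟩

def glue {W : Type v} : ∀ {Y : WithTerminal (Type v)}, (W → (one ⟶ Y)) → (of W ⟶ Y)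
  | of _, p => incl.map (↾fun w => down (p w) PUnit.unit)
  | WithTerminal.star, _ => starTerminal.from _

lemma point_glue {W : Type v} {Y : WithTerminal (Type v)} (p : W → (one ⟶ Y)) (w : W) :
    point w ≫ glue p = p w := by
  cases Y with
  | star => exact Subsingleton.elim _ _
  | of S => exact (point_comp w _).trans (eq_point (p w)).symm

lemma isCoproductOf_point (W : Type v) :
    IsCoproductOf (fun _ : W => one) (of W) point :=
  fun _ p => ⟨glue p, point_glue p,
    fun _ h => hom_ext_point fun w => (h w).trans (point_glue p w).symm⟩

lemma ne_star_of_hom {P X : WithTerminal (Type v)} (f : P ⟶ X) (hX : X ≠ star) : P ≠ star := by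
  rintro rfl
  cases X with
  | star => exact hX rfl
  | of _ => exact false_of_from_star f

lemma isCoproductOf_points {P : WithTerminal (Type v)} (hP : P ≠ star) :
    IsCoproductOf (fun _ : (one ⟶ P) => one) P (fun x => x) := by
  cases P with
  | star => exact absurd rfl hP
  | of W =>
    intro Z g
    refine ⟨glue fun w => g (point w), fun x => ?_, fun d hd => hom_ext_point fun w => ?_⟩
    · rw [eq_point x, point_glue]
    · rw [hd, point_glue]

lemma hom_ext_of_points {X Y : WithTerminal (Type v)} {u u' : X ⟶ Y}
    (h : ∀ x : one ⟶ X, x ≫ u = x ≫ u') : u = u' := by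
  cases X with
  | of W => exact hom_ext_point fun w => h (point w)
  | star =>
    cases Y with
    | star => exact Subsingleton.elim _ _
    | of _ => exact (false_of_from_star u).elim

lemma hom_eq_of_eq_star {X Y : WithTerminal (Type v)} (hY : Y = star) (f g : X ⟶ Y) : f = g := by
  subst hY
  exact Subsingleton.elim f g

section Limits

open Limits

variable {J : Type v} [SmallCategory J] (F : J ⥤ WithTerminal (Type v))

abbrev PointSections : Type v := (F ⋙ coyoneda.obj (Opposite.op one)).sections

def sectionsProj (j : J) : of (PointSections F) ⟶ F.obj j :=
  glue fun s => s.1 j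

lemma point_comp_sectionsProj (s : PointSections F) (j : J) :
    point s ≫ sectionsProj F j = s.1 j :=
  point_glue _ s

lemma sectionsProj_comp_map {i j : J} (f : i ⟶ j) :
    sectionsProj F i ≫ F.map f = sectionsProj F j :=
  hom_ext_point fun s => by
    rw [← Category.assoc, point_comp_sectionsProj, point_comp_sectionsProj]
    exact s.2 f

lemma sectionsProj_point_ext {y z : one ⟶ of (PointSections F)}
    (h : ∀ j, y ≫ sectionsProj F j = z ≫ sectionsProj F j) : y = z := by
  rw [eq_point y, eq_point z]
  congr 1
  ext j
  have := h j
  rwa [eq_point y, eq_point z, point_comp_sectionsProj, point_comp_sectionsProj] at this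

def sectionsCone : Cone F where
  pt := of (PointSections F)
  π :=
    { app := sectionsProj F
      naturality := fun _ _ f => (Category.id_comp _).trans (sectionsProj_comp_map F f).symm }

noncomputable def sectionsConeIsLimit {j₀ : J} (h₀ : F.obj j₀ ≠ star) :
    IsLimit (sectionsCone F) :=
  IsLimit.ofExistsUnique fun c => by
    show ∃! l : c.pt ⟶ of (PointSections F), ∀ j, l ≫ sectionsProj F j = c.π.app j
    let sec (x : one ⟶ c.pt) : PointSections F :=
      ⟨fun j => x ≫ c.π.app j, fun f => by simp⟩
    obtain ⟨l, hl, -⟩ : ∃! l : c.pt ⟶ of (PointSections F), ∀ x, x ≫ l = point (sec x) :=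
      isCoproductOf_points (ne_star_of_hom (c.π.app j₀) h₀) _ fun x => point (sec x)
    have hlπ (j : J) : l ≫ sectionsProj F j = c.π.app j :=
      hom_ext_of_points fun x => by rw [← Category.assoc, hl x, point_comp_sectionsProj]
    refine ⟨l, hlπ, fun l' hl' => hom_ext_of_points fun x => sectionsProj_point_ext F fun j => ?_⟩
    rw [Category.assoc, Category.assoc, hl', hlπ]

def starCone (h : ∀ j, F.obj j = star) : Cone F where
  pt := star
  π :=
    { app := fun j => eqToHom (h j).symm
      naturality := fun _ j _ => hom_eq_of_eq_star (h j) _ _ }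

noncomputable def starConeIsLimit (h : ∀ j, F.obj j = star) : IsLimit (starCone F h) :=
  IsLimit.ofExistsUnique fun _ =>
    ⟨starTerminal.from _, fun j => hom_eq_of_eq_star (h j) _ _,
      fun _ _ => hom_eq_of_eq_star rfl _ _⟩

end Limits

instance : Limits.HasLimits (WithTerminal (Type v)) where
  has_limits_of_shape _ _ := ⟨fun F => by
    by_cases h : ∀ j, F.obj j = star
    · exact ⟨⟨⟨_, starConeIsLimit F h⟩⟩⟩
    · push Not at h
      obtain ⟨j₀, h₀⟩ := h
      exact ⟨⟨⟨_, sectionsConeIsLimit F h₀⟩⟩⟩⟩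

lemma exists_not_isIso_bijective_comp (G : WithTerminal (Type v)) :
    ∃ (A B : WithTerminal (Type v)) (m : A ⟶ B),
      ¬ IsIso m ∧ Function.Bijective fun g : G ⟶ A => g ≫ m := by
  cases G with
  | of X =>
    refine ⟨one, star, starTerminal.from _,
      fun _ => false_of_from_star (inv (starTerminal.from one)), ?_⟩
    exact ⟨fun _ _ _ => Subsingleton.elim _ _,
      fun _ => ⟨incl.map (↾fun _ => PUnit.unit), Subsingleton.elim _ _⟩⟩
  | star =>
    refine ⟨of PEmpty, one, incl.map (↾PEmpty.elim), fun _ => ?_,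
      fun g => (false_of_from_star g).elim, fun h => (false_of_from_star h).elim⟩
    exact (down (inv (incl.map (↾PEmpty.elim) : of PEmpty ⟶ one)) PUnit.unit).elim

lemma isEmpty_equivalence_algebra (T : Monad (Type v)) :
    IsEmpty (WithTerminal (Type v) ≌ T.Algebra) := by
  refine ⟨fun e => ?_⟩
  obtain ⟨A, B, m, hm, hbij⟩ :=
    exists_not_isIso_bijective_comp (e.inverse.obj (T.free.obj PUnit))
  have : IsIso (e.functor.map m) := Monad.isIso_of_bijective_comp_free _
    ((Adjunction.bijective_comp_iff e.symm.toAdjunction _ m).1 hbij)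
  exact hm (isIso_of_fully_faithful e.functor m)

lemma abstractlyFinite_one : AbstractlyFinite (one : WithTerminal (Type v)) := by
  intro M C ι hC f
  obtain ⟨m, rfl⟩ := hC.exists_eq_inj (isCoproductOf_point M) (fun x => ⟨_, eq_point x⟩) f
  exact ⟨{m}, Set.finite_singleton m, fun _ ι₀ _ _ hι₀ => ⟨ι₀ ⟨m, rfl⟩, hι₀ ⟨m, rfl⟩⟩⟩

lemma surjective_down_of_epi {X Y : Type v} (e : of X ⟶ of Y) [Epi e] :
    Function.Surjective (down e) :=
  (epi_iff_surjective _).1 (Functor.epi_of_epi_map (F := incl) ‹_›)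

lemma regularProjective_one : RegularProjective (one : WithTerminal (Type v)) := by
  rintro A B e ⟨R, r0, r1, he⟩ g
  cases B with
  | star =>
    cases A with
    | star => exact ⟨starTerminal.from _, Subsingleton.elim _ _⟩
    | of X =>
      obtain ⟨k, -⟩ := he.2 one (incl.map (↾fun _ => PUnit.unit)) (Subsingleton.elim _ _)
      exact (false_of_from_star k).elim
  | of Y =>
    cases A with
    | star => exact (false_of_from_star e).elim
    | of X =>
      have := IsCoequalizerOf.epi he
      obtain ⟨x, hx⟩ := surjective_down_of_epi e (down g PUnit.unit)
      exact ⟨point x, by rw [point_comp, hx, ← eq_point]⟩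

lemma generatorP_one : GeneratorP (one : WithTerminal (Type v)) :=
  fun _ _ _ _ d hd => ⟨fun u w h => hom_ext_of_points fun x => by
    rw [← hd x, Category.assoc, h, Category.assoc]⟩

lemma factors_of_forall_points {R S X : WithTerminal (Type v)} {r0 r1 : R ⟶ X} {s0 s1 : S ⟶ X}
    (hS : S ≠ star) (h : ∀ x : one ⟶ S, Factors r0 r1 (x ≫ s0) (x ≫ s1)) :
    Factors r0 r1 s0 s1 := by
  choose t ht0 ht1 using h
  obtain ⟨t', ht', -⟩ := isCoproductOf_points hS R t
  exact ⟨t', hom_ext_of_points fun x => by rw [reassoc_of% (ht' x), ht0],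
    hom_ext_of_points fun x => by rw [reassoc_of% (ht' x), ht1]⟩

def IsCongruence.setoid {R : WithTerminal (Type v)} {X : Type v} {r0 r1 : R ⟶ of X}
    (h : IsCongruence r0 r1) : Setoid X where
  r a b := Factors r0 r1 (point a) (point b)
  iseqv := ⟨fun a => h.2.1 one (point a), h.2.2.1 one _ _, h.2.2.2 one _ _ _⟩

def IsCongruence.quotientMap {R : WithTerminal (Type v)} {X : Type v} {r0 r1 : R ⟶ of X}
    (h : IsCongruence r0 r1) : of X ⟶ of (Quotient h.setoid) :=
  incl.map (↾Quotient.mk h.setoid)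

lemma IsCongruence.comp_quotientMap_eq_iff {R : WithTerminal (Type v)} {X : Type v}
    {r0 r1 : R ⟶ of X} (h : IsCongruence r0 r1) {u w : one ⟶ of X} :
    u ≫ h.quotientMap = w ≫ h.quotientMap ↔ Factors r0 r1 u w := by
  rw [eq_point u, eq_point w, point_comp, point_comp]
  exact ⟨fun huw => Quotient.exact (congrArg (fun x : one ⟶ of _ => down x PUnit.unit) huw),
    fun huw => congrArg point (Quotient.sound huw)⟩

lemma effectiveCongruences : EffectiveCongruences (WithTerminal (Type v)) := by
  intro R A r0 r1 hr
  cases A with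
  | star =>
    refine ⟨star, 𝟙 _, .of_factors hr.1 (Subsingleton.elim _ _) fun S s0 s1 _ => ?_⟩
    rw [Subsingleton.elim s1 s0]
    exact hr.2.1 S s0
  | of X =>
    refine ⟨of (Quotient hr.setoid), hr.quotientMap,
      .of_factors hr.1 ?_ fun S s0 s1 hs => ?_⟩
    · exact hom_ext_of_points fun x => by
        simpa only [Category.assoc] using hr.comp_quotientMap_eq_iff.2 ⟨x, rfl, rfl⟩
    · refine factors_of_forall_points (ne_star_of_hom s0 nofun) fun x => ?_
      exact hr.comp_quotientMap_eq_iff.1 (by simp only [Category.assoc, hs])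

/-- `Set⋆ = WithTerminal Set` has finite limits, no object of it is a
strong generator, and it is not equivalent to any variety, although it has effective
congruences and `1` is an abstractly finite, regularly projective generator. -/
theorem stmt10 :
    Limits.HasFiniteLimits (WithTerminal (Type v)) ∧
    (∀ G : WithTerminal (Type v), ∃ (A B : WithTerminal (Type v)) (m : A ⟶ B),
      ¬ IsIso m ∧ ∀ h : G ⟶ B, ∃! g : G ⟶ A, g ≫ m = h) ∧
    (¬ ∃ T : Monad (Type v),
        (∀ (J : Type v) [SmallCategory J] [IsFiltered J],
          Limits.PreservesColimitsOfShape J T.toFunctor) ∧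
        Nonempty (WithTerminal (Type v) ≌ T.Algebra)) ∧
    EffectiveCongruences (WithTerminal (Type v)) ∧
    AbstractlyFinite (WithTerminal.of (PUnit : Type v)) ∧
    RegularProjective (WithTerminal.of (PUnit : Type v)) ∧
    GeneratorP (WithTerminal.of (PUnit : Type v)) := by
  refine ⟨inferInstance, fun G => ?_, fun ⟨T, _, ⟨e⟩⟩ => (isEmpty_equivalence_algebra T).false e,
    effectiveCongruences, abstractlyFinite_one, regularProjective_one, generatorP_one⟩
  obtain ⟨A, B, m, hm, hbij⟩ := exists_not_isIso_bijective_comp G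
  exact ⟨A, B, m, hm, Function.bijective_iff_existsUnique _ |>.1 hbij⟩

end Paper
end

section
/- Let K be a cocomplete category with kernel pairs, and let G be an abstractly finite, regularly projective strong generator with copowers. Then every morphism f : G → ∐_{i∈I} A_i from G into an arbitrary coproduct factorizes through a finite subcoproduct: there is a finite subset J ⊆ I such that f factors through the canonical morphism ∐_{i∈J} A_i → ∐_{i∈I} A_i. -/
open CategoryTheory

universe v u

namespace Paper

variable {K : Type u} [Category.{v} K]

section Aux

open CategoryTheory.Limits

variable {K : Type u} [Category.{v} K] [Limits.HasColimits K]

lemma isCoproductOf_sigma {M : Type v} (Y : M → K) :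
    IsCoproductOf Y (∐ Y) (Sigma.ι Y) := by
  intro Z g
  refine ⟨Sigma.desc g, fun m => Sigma.ι_desc _ _, fun d hd => ?_⟩
  apply Sigma.hom_ext
  intro m
  simp [hd m]

lemma mono_of_G {G : K} (hcop : HasCopowers G) (hstrong : StrongGenerator G)
    {Q B : K} (m : Q ⟶ B) (hm : ∀ u v : G ⟶ Q, u ≫ m = v ≫ m → u = v) : Mono m := by
  constructor
  intro T u v huv
  obtain ⟨C', ι', hco⟩ := hcop (G ⟶ T)
  obtain ⟨d, hd, -⟩ := hco T (fun h => h)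
  have hepi : Epi d := (hstrong T C' ι' hco d hd).1
  have : d ≫ u = d ≫ v := by
    refine ((hco _ (fun h => h ≫ u)).unique
      (fun h => by rw [← Category.assoc, hd h]) (fun h => ?_))
    rw [← Category.assoc, hd h]
    exact (hm (h ≫ u) (h ≫ v) (by simp only [Category.assoc, huv])).symm
  exact (cancel_epi d).mp this

lemma isCoequalizerOf_pi {R A : K} (r0 r1 : R ⟶ A) :
    IsCoequalizerOf r0 r1 (coequalizer.π r0 r1) := by
  refine ⟨coequalizer.condition r0 r1, fun Z f hf => ?_⟩
  refine ⟨coequalizer.desc f hf, coequalizer.π_desc _ _, fun g hg => ?_⟩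
  apply coequalizer.hom_ext
  rw [hg, coequalizer.π_desc]

lemma regEpi_of_extremal {G : K} (hkp : HasKernelPairs K) (hcop : HasCopowers G)
    (hproj : RegularProjective G) (hstrong : StrongGenerator G)
    {A B : K} (e : A ⟶ B) (he : IsExtremalEpi e) : IsRegEpi e := by
  obtain ⟨R, r0, r1, hcomm, hkpu⟩ := hkp A B e
  have hce := isCoequalizerOf_pi r0 r1
  set Q := coequalizer r0 r1 with hQ
  set c := coequalizer.π r0 r1 with hcdef
  have hcreg : IsRegEpi c := ⟨R, r0, r1, hce⟩
  set m : Q ⟶ B := coequalizer.desc e hcomm with hmdef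
  have hcm : c ≫ m = e := coequalizer.π_desc _ _
  have hmono : Mono m := by
    apply mono_of_G hcop hstrong
    intro u v huv
    obtain ⟨u', hu'⟩ := hproj A Q c hcreg u
    obtain ⟨v', hv'⟩ := hproj A Q c hcreg v
    have heq : u' ≫ e = v' ≫ e := by
      rw [← hcm, ← Category.assoc, ← Category.assoc, hu', hv', huv]
    obtain ⟨t, ⟨ht0, ht1⟩, -⟩ := hkpu G u' v' heq
    calc u = u' ≫ c := hu'.symm
      _ = t ≫ r0 ≫ c := by rw [← ht0, Category.assoc]
      _ = t ≫ r1 ≫ c := by rw [coequalizer.condition]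
      _ = v' ≫ c := by rw [← Category.assoc, ht1]
      _ = v := hv'
  have hiso : IsIso m := he.2 Q c m hmono hcm
  refine ⟨R, r0, r1, hcomm, fun Z w hw => ?_⟩
  obtain ⟨y, hy, hyu⟩ := hce.2 Z w hw
  refine ⟨inv m ≫ y, ?_, fun x hx => ?_⟩
  · show e ≫ (inv m ≫ y) = w
    rw [← hcm, Category.assoc, ← Category.assoc m, IsIso.hom_inv_id,
      Category.id_comp, hy]
  · have hmx : m ≫ x = y := by
      apply hyu
      rw [← Category.assoc, hcm, hx]
    rw [← hmx, ← Category.assoc, IsIso.inv_hom_id, Category.id_comp]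

end Aux

/-- if `G` is an abstractly finite, regularly projective strong generator
with copowers in a cocomplete category with kernel pairs, then every morphism from `G`
into a coproduct factorizes through a finite subcoproduct. -/
theorem stmt11 {K : Type u} [Category.{v} K] [Limits.HasColimits K]
    (hkp : HasKernelPairs K) (G : K) (hcop : HasCopowers G)
    (haf : AbstractlyFinite G) (hproj : RegularProjective G)
    (hstrong : StrongGenerator G) :
    ∀ (I : Type v) (A : I → K) (C : K) (ι : ∀ i, A i ⟶ C), IsCoproductOf A C ι →
      ∀ f : G ⟶ C, ∃ J : Set I, J.Finite ∧
        ∀ (C₀ : K) (ι₀ : ∀ j : J, A j.1 ⟶ C₀) (u : C₀ ⟶ C),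
          IsCoproductOf (fun j : J => A j.1) C₀ ι₀ → (∀ j : J, ι₀ j ≫ u = ι j.1) →
            ∃ g : G ⟶ C₀, g ≫ u = f := by
  intro I A C ι hC f
  classical
  -- the copower over `G ⟶ A i` and its canonical (regular epi) morphism to `A i`
  let Di : I → K := fun i => ∐ (fun _ : (G ⟶ A i) => G)
  let qi : ∀ i, Di i ⟶ A i := fun i => Limits.Sigma.desc (fun h => h)
  have hqi : ∀ i, IsRegEpi (qi i) := by
    intro i
    apply regEpi_of_extremal hkp hcop hproj hstrong
    exact hstrong (A i) (Di i) (fun h => Limits.Sigma.ι (fun _ : (G ⟶ A i) => G) h)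
      (isCoproductOf_sigma _) (qi i) (fun h => Limits.Sigma.ι_desc _ _)
  choose Ri r0i r1i hcoeq using hqi
  -- the total copower and the canonical morphism `p` to `C`
  let M : Type v := Σ i : I, (G ⟶ A i)
  let P : K := ∐ (fun _ : M => G)
  let p : P ⟶ C := Limits.Sigma.desc (fun m => m.2 ≫ ι m.1)
  let κ : ∀ i, Di i ⟶ P := fun i => Limits.Sigma.desc
    (fun h => Limits.Sigma.ι (fun _ : M => G) ⟨i, h⟩)
  have hκp : ∀ i, κ i ≫ p = qi i ≫ ι i := by
    intro i
    apply Limits.Sigma.hom_ext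
    intro h
    simp [κ, p, qi]
  -- `p` is a regular epimorphism
  have hpreg : IsRegEpi p := by
    refine ⟨∐ Ri, Limits.Sigma.desc (fun i => r0i i ≫ κ i),
      Limits.Sigma.desc (fun i => r1i i ≫ κ i), ?_, ?_⟩
    · apply Limits.Sigma.hom_ext
      intro i
      have h0 : Limits.Sigma.ι Ri i ≫ Limits.Sigma.desc (fun i => r0i i ≫ κ i)
          = r0i i ≫ κ i := Limits.Sigma.ι_desc _ _
      have h1 : Limits.Sigma.ι Ri i ≫ Limits.Sigma.desc (fun i => r1i i ≫ κ i)
          = r1i i ≫ κ i := Limits.Sigma.ι_desc _ _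
      rw [← Category.assoc, h0, ← Category.assoc, h1, Category.assoc, Category.assoc,
        hκp i, ← Category.assoc, (hcoeq i).1, Category.assoc]
    · intro Z w hw
      have hwi : ∀ i, r0i i ≫ (κ i ≫ w) = r1i i ≫ (κ i ≫ w) := by
        intro i
        have h2 := congrArg (fun x => Limits.Sigma.ι Ri i ≫ x) hw
        simpa using h2
      choose gi hgi hgiu using fun i => (hcoeq i).2 Z (κ i ≫ w) (hwi i)
      obtain ⟨g, hg, hgu⟩ := hC Z gi
      refine ⟨g, ?_, fun g' hg' => ?_⟩
      · show p ≫ g = w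
        apply Limits.Sigma.hom_ext
        intro m
        have h1 : Limits.Sigma.ι (fun _ : (G ⟶ A m.1) => G) m.2 ≫ κ m.1
            = Limits.Sigma.ι (fun _ : M => G) m := by
          simp [κ]
        calc Limits.Sigma.ι (fun _ : M => G) m ≫ p ≫ g
            = m.2 ≫ ι m.1 ≫ g := by simp [p]
          _ = m.2 ≫ gi m.1 := by rw [hg m.1]
          _ = Limits.Sigma.ι (fun _ : (G ⟶ A m.1) => G) m.2 ≫ qi m.1 ≫ gi m.1 := by
              simp [qi]
          _ = Limits.Sigma.ι (fun _ : (G ⟶ A m.1) => G) m.2 ≫ κ m.1 ≫ w := by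
              rw [hgi m.1]
          _ = Limits.Sigma.ι (fun _ : M => G) m ≫ w := by rw [← Category.assoc, h1]
      · apply hgu
        intro i
        apply hgiu
        rw [← Category.assoc, ← hκp i, Category.assoc]
        show κ i ≫ p ≫ g' = κ i ≫ w
        rw [hg']
  -- factor `f` through `p`, then through a finite subcopower
  obtain ⟨g, hgp⟩ := hproj P C p hpreg f
  obtain ⟨M₀, hM₀fin, hM₀⟩ := haf M P (Limits.Sigma.ι (fun _ : M => G))
    (isCoproductOf_sigma _) g
  obtain ⟨g₀, hg₀⟩ := hM₀ (∐ (fun _ : M₀ => G))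
    (fun m => Limits.Sigma.ι (fun _ : M₀ => G) m)
    (Limits.Sigma.desc (fun m : M₀ => Limits.Sigma.ι (fun _ : M => G) m.1))
    (isCoproductOf_sigma _) (fun m => Limits.Sigma.ι_desc _ _)
  refine ⟨(fun m : M => m.1) '' M₀, hM₀fin.image _, ?_⟩
  intro C₀ ι₀ u hC₀ hu
  let v : (∐ (fun _ : M₀ => G)) ⟶ C₀ := Limits.Sigma.desc
    (fun m : M₀ => m.1.2 ≫ ι₀ ⟨m.1.1, Set.mem_image_of_mem _ m.2⟩)
  have hvu : v ≫ u = Limits.Sigma.desc (fun m : M₀ => Limits.Sigma.ι (fun _ : M => G) m.1) ≫ p := by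
    apply Limits.Sigma.hom_ext
    intro m
    have h1 : Limits.Sigma.ι (fun _ : M₀ => G) m ≫ v
        = m.1.2 ≫ ι₀ ⟨m.1.1, Set.mem_image_of_mem _ m.2⟩ := Limits.Sigma.ι_desc _ _
    have h2 : Limits.Sigma.ι (fun _ : M₀ => G) m
          ≫ Limits.Sigma.desc (fun m : M₀ => Limits.Sigma.ι (fun _ : M => G) m.1)
        = Limits.Sigma.ι (fun _ : M => G) m.1 := Limits.Sigma.ι_desc _ _
    have h3 : Limits.Sigma.ι (fun _ : M => G) m.1 ≫ p
        = m.1.2 ≫ ι m.1.1 := Limits.Sigma.ι_desc _ _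
    rw [← Category.assoc, h1, ← Category.assoc, h2, h3, Category.assoc,
      hu ⟨m.1.1, Set.mem_image_of_mem _ m.2⟩]
  refine ⟨g₀ ≫ v, ?_⟩
  rw [Category.assoc, hvu, ← Category.assoc, hg₀, hgp]

end Paper
end
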